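/- Let Π be the 6×6 projector with entries Π_{ij} = (1/2)⟨a_i, a_j⟩ where a_i are the six vectors (1,1,0)/√2, (1,0,1)/√2, (0,1,1)/√2, (1,−1,0)/√2, (1,0,−1)/√2, (0,1,−1)/√2 in ℂ³. Then g(Π) := sup over complex |s_i| ≤ 1, |t_j| ≤ 1 of |∑_{i,j} Π_{ij} s_i t_j| satisfies g(Π) < 6. -/

import Mathlib

/-!
Write `A` for the `6 × 3` matrix with rows `cohVec i`. Since `A` is real, the form equals
`½ (sᵀA) ⬝ (tᵀA)`, so by Cauchy–Schwarz it suffices to show that `Φ(s) = ‖sᵀA‖²` stays below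
`12` on the polydisc, and by compactness it suffices to show `Φ(s) < 12` pointwise.
Pairing `U = sᵀA` back against `s` gives `Φ ≤ ∑ᵢ |(AU)ᵢ| = 2^{-1/2} ∑_{a<b} (|U_a + U_b| + |U_a - U_b|)`,
and Cauchy–Schwarz with the parallelogram law bounds the right-hand side by `√12 · √Φ`.
Equality would require equal `|U_a|` and `|U_a² - U_b²| = |U_a|² + |U_b|²` for all three pairs,
i.e. three pairwise antipodal points `U_a²` of a circle, which is impossible unless `U = 0`.
-/

noncomputable def cohVec : Fin 6 → Fin 3 → ℂ :=
  ![(Real.sqrt 2)⁻¹ • ![1, 1, 0],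
    (Real.sqrt 2)⁻¹ • ![1, 0, 1],
    (Real.sqrt 2)⁻¹ • ![0, 1, 1],
    (Real.sqrt 2)⁻¹ • ![1, -1, 0],
    (Real.sqrt 2)⁻¹ • ![1, 0, -1],
    (Real.sqrt 2)⁻¹ • ![0, 1, -1]]

noncomputable def cohProj : Matrix (Fin 6) (Fin 6) ℂ :=
  Matrix.of fun i j => (1 / 2 : ℂ) * ∑ k, (starRingEnd ℂ) (cohVec i k) * cohVec j k

open Matrix ComplexConjugate

theorem norm_sub_sq_add_norm_sub_sq_add_norm_sub_sq_le {E : Type*} [NormedAddCommGroup E]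
    [InnerProductSpace ℝ E] (a b c : E) :
    ‖a - b‖ ^ 2 + ‖a - c‖ ^ 2 + ‖b - c‖ ^ 2 ≤ 3 * (‖a‖ ^ 2 + ‖b‖ ^ 2 + ‖c‖ ^ 2) := by
  have h : ‖a + b + c‖ ^ 2 = ‖a‖ ^ 2 + ‖b‖ ^ 2 + ‖c‖ ^ 2
      + 2 * (inner ℝ a b + inner ℝ a c + inner ℝ b c) := by
    rw [norm_add_sq_real, norm_add_sq_real, inner_add_left]; ring
  rw [norm_sub_sq_real, norm_sub_sq_real, norm_sub_sq_real]
  nlinarith [sq_nonneg ‖a + b + c‖]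

theorem Complex.sq_norm_add_add_norm_sub (x y : ℂ) :
    (‖x + y‖ + ‖x - y‖) ^ 2 = 2 * (‖x‖ ^ 2 + ‖y‖ ^ 2) + 2 * ‖x ^ 2 - y ^ 2‖ := by
  have h : ‖x + y‖ * ‖x - y‖ = ‖x ^ 2 - y ^ 2‖ := by rw [← norm_mul]; ring_nf
  linear_combination parallelogram_law_with_norm ℝ x y + 2 * h

theorem Complex.norm_sq_sub_sq_le (x y : ℂ) : ‖x ^ 2 - y ^ 2‖ ≤ ‖x‖ ^ 2 + ‖y‖ ^ 2 := by
  rw [← norm_pow, ← norm_pow]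
  exact norm_sub_le _ _

/-- Equality would force all `q` equal and every `d` maximal, hence all `n` equal,
contradicting `hd`. -/
theorem sq_sum_lt_of_pair_bounds (n₁ n₂ n₃ d₁₂ d₁₃ d₂₃ q₁₂ q₁₃ q₂₃ : ℝ)
    (hN : 0 < n₁ + n₂ + n₃)
    (hd₁₂ : d₁₂ ≤ n₁ + n₂) (hd₁₃ : d₁₃ ≤ n₁ + n₃) (hd₂₃ : d₂₃ ≤ n₂ + n₃)
    (hq₁₂ : q₁₂ ^ 2 = 2 * (n₁ + n₂) + 2 * d₁₂) (hq₁₃ : q₁₃ ^ 2 = 2 * (n₁ + n₃) + 2 * d₁₃)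
    (hq₂₃ : q₂₃ ^ 2 = 2 * (n₂ + n₃) + 2 * d₂₃)
    (hd : d₁₂ ^ 2 + d₁₃ ^ 2 + d₂₃ ^ 2 ≤ 3 * (n₁ ^ 2 + n₂ ^ 2 + n₃ ^ 2)) :
    (q₁₂ + q₁₃ + q₂₃) ^ 2 < 24 * (n₁ + n₂ + n₃) := by
  nlinarith [sq_nonneg (q₁₂ - q₁₃), sq_nonneg (q₁₂ - q₂₃), sq_nonneg (q₁₃ - q₂₃)]

theorem Complex.sq_sum_norm_add_add_norm_sub_lt (x y z : ℂ)
    (h : 0 < ‖x‖ ^ 2 + ‖y‖ ^ 2 + ‖z‖ ^ 2) :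
    (‖x + y‖ + ‖x - y‖ + (‖x + z‖ + ‖x - z‖) + (‖y + z‖ + ‖y - z‖)) ^ 2
      < 24 * (‖x‖ ^ 2 + ‖y‖ ^ 2 + ‖z‖ ^ 2) := by
  have hsq := norm_sub_sq_add_norm_sub_sq_add_norm_sub_sq_le (x ^ 2) (y ^ 2) (z ^ 2)
  simp only [norm_pow] at hsq
  exact sq_sum_lt_of_pair_bounds _ _ _ _ _ _ _ _ _ h (norm_sq_sub_sq_le x y) (norm_sq_sub_sq_le x z)
    (norm_sq_sub_sq_le y z) (sq_norm_add_add_norm_sub x y) (sq_norm_add_add_norm_sub x z)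
    (sq_norm_add_add_norm_sub y z) hsq

theorem Matrix.norm_dotProduct_le {n : Type*} [Fintype n] (u v : n → ℂ) :
    ‖u ⬝ᵥ v‖ ≤ ∑ k, ‖u k‖ * ‖v k‖ :=
  (norm_sum_le _ _).trans_eq (by simp only [norm_mul])

theorem Matrix.sum_norm_sq_vecMul_le {m n : Type*} [Fintype m] [Fintype n] (A : Matrix m n ℂ)
    (s : m → ℂ) (hs : ∀ i, ‖s i‖ ≤ 1) :
    ∑ k, ‖(s ᵥ* A) k‖ ^ 2 ≤ ∑ i, ‖(A *ᵥ star (s ᵥ* A)) i‖ :=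
  calc ∑ k, ‖(s ᵥ* A) k‖ ^ 2 = (s ⬝ᵥ (A *ᵥ star (s ᵥ* A))).re := by
        rw [dotProduct_mulVec, dotProduct, Complex.re_sum]
        simp [Complex.mul_conj, Complex.normSq_eq_norm_sq]
        norm_cast
    _ ≤ ‖s ⬝ᵥ (A *ᵥ star (s ᵥ* A))‖ := Complex.re_le_norm _
    _ ≤ ∑ i, ‖s i‖ * ‖(A *ᵥ star (s ᵥ* A)) i‖ := norm_dotProduct_le _ _
    _ ≤ ∑ i, ‖(A *ᵥ star (s ᵥ* A)) i‖ :=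
        Finset.sum_le_sum fun i _ => mul_le_of_le_one_left (norm_nonneg _) (hs i)

theorem Matrix.norm_dotProduct_sq_le {n : Type*} [Fintype n] (u v : n → ℂ) :
    ‖u ⬝ᵥ v‖ ^ 2 ≤ (∑ k, ‖u k‖ ^ 2) * ∑ k, ‖v k‖ ^ 2 :=
  (pow_le_pow_left₀ (norm_nonneg _) (norm_dotProduct_le u v) 2).trans
    (Finset.sum_mul_sq_le_sq_mul_sq _ _ _)

theorem cohVec_conj (i : Fin 6) (k : Fin 3) : conj (cohVec i k) = cohVec i k := by
  fin_cases i <;> fin_cases k <;> simp [cohVec]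

theorem sum_cohProj_mul_mul (s t : Fin 6 → ℂ) :
    ∑ i, ∑ j, cohProj i j * s i * t j = 1 / 2 * ((s ᵥ* of cohVec) ⬝ᵥ (t ᵥ* of cohVec)) := by
  simp only [cohProj, of_apply, cohVec_conj, vecMul, dotProduct, Finset.mul_sum, Finset.sum_mul]
  simp_rw [Finset.sum_comm (γ := Fin 6) (α := Fin 3)]
  refine Finset.sum_congr rfl fun k _ => ?_
  rw [Finset.sum_comm]
  exact Finset.sum_congr rfl fun j _ => Finset.sum_congr rfl fun i _ => by ring

theorem sum_norm_cohVec_mulVec_star (U : Fin 3 → ℂ) :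
    ∑ i, ‖(of cohVec *ᵥ star U) i‖ = (√2)⁻¹ * (‖U 0 + U 1‖ + ‖U 0 - U 1‖
      + (‖U 0 + U 2‖ + ‖U 0 - U 2‖) + (‖U 1 + U 2‖ + ‖U 1 - U 2‖)) := by
  simp only [Fin.sum_univ_six, mulVec, dotProduct, Fin.sum_univ_three, cohVec]
  simp [← mul_add, ← sub_eq_add_neg, ← mul_sub, ← map_add, ← map_sub, abs_of_nonneg]
  ring

theorem sum_norm_sq_vecMul_cohVec_lt_twelve (s : Fin 6 → ℂ) (hs : ∀ i, ‖s i‖ ≤ 1) :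
    ∑ k, ‖(s ᵥ* of cohVec) k‖ ^ 2 < 12 := by
  set U := s ᵥ* of cohVec
  have hle := (sum_norm_sq_vecMul_le (of cohVec) s hs).trans_eq (sum_norm_cohVec_mulVec_star U)
  rw [Fin.sum_univ_three] at hle ⊢
  rcases (by positivity : 0 ≤ ‖U 0‖ ^ 2 + ‖U 1‖ ^ 2 + ‖U 2‖ ^ 2).eq_or_lt with h0 | hpos
  · linarith
  have hlt := Complex.sq_sum_norm_add_add_norm_sub_lt (U 0) (U 1) (U 2) hpos
  have hc : ((√2)⁻¹) ^ 2 = (1 / 2 : ℝ) := by rw [inv_pow, Real.sq_sqrt zero_le_two]; norm_num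
  nlinarith [pow_le_pow_left₀ hpos.le hle 2]

theorem exists_lt_twelve_forall_sum_norm_sq_vecMul_cohVec_le :
    ∃ M < 12, ∀ s : Fin 6 → ℂ, (∀ i, ‖s i‖ ≤ 1) → ∑ k, ‖(s ᵥ* of cohVec) k‖ ^ 2 ≤ M := by
  have hball (s : Fin 6 → ℂ) : s ∈ Metric.closedBall 0 1 ↔ ∀ i, ‖s i‖ ≤ 1 := by
    rw [mem_closedBall_zero_iff, pi_norm_le_iff_of_nonneg zero_le_one]
  obtain ⟨s₀, hs₀, hmax⟩ := (isCompact_closedBall (0 : Fin 6 → ℂ) 1).exists_isMaxOn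
    ⟨0, Metric.mem_closedBall_self zero_le_one⟩
    (f := fun s => ∑ k, ‖(s ᵥ* of cohVec) k‖ ^ 2) (by fun_prop)
  exact ⟨_, sum_norm_sq_vecMul_cohVec_lt_twelve s₀ ((hball s₀).1 hs₀),
    fun s hs => hmax ((hball s).2 hs)⟩

theorem g_cohProj_lt_six :
    sSup {x : ℝ | ∃ s t : Fin 6 → ℂ,
        (∀ i, ‖s i‖ ≤ 1) ∧ (∀ j, ‖t j‖ ≤ 1) ∧
        x = ‖∑ i, ∑ j, cohProj i j * s i * t j‖} < 6 := by
  obtain ⟨M, hM, hbound⟩ := exists_lt_twelve_forall_sum_norm_sq_vecMul_cohVec_le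
  have hM₀ : 0 ≤ M := le_trans (by positivity) (hbound 0 fun _ => by simp)
  refine (Real.sSup_le ?_ (by positivity : 0 ≤ M / 2)).trans_lt (by linarith)
  rintro x ⟨s, t, hs, ht, rfl⟩
  have hst := (norm_dotProduct_sq_le (s ᵥ* of cohVec) (t ᵥ* of cohVec)).trans
    (mul_le_mul (hbound s hs) (hbound t ht) (by positivity) hM₀)
  have hhalf : ‖(1 / 2 : ℂ)‖ = 1 / 2 := by norm_num
  rw [sum_cohProj_mul_mul, norm_mul, hhalf]
  nlinarith [norm_nonneg ((s ᵥ* of cohVec) ⬝ᵥ (t ᵥ* of cohVec))]
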